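/- arXiv:2411.17010 — 5 statements merged into one kernel-verified Lean document; each statement's English description precedes it below -/
import Mathlib

section
/- Let S be a numerical semigroup generated by g_1, ..., g_k and let g = g_1 + ... + g_k. For all n in S with n > g_1^2 · g, the maximum infinity-length of factorizations satisfies ℓ_∞^M(n) = ℓ_∞^M(n - g_1) + 1. -/
/-- `z` is a factorization of `n` with respect to the generators `g`. -/
def IsFactorization {k : ℕ} (g : Fin k → ℕ) (n : ℕ) (z : Fin k → ℕ) : Prop :=
  ∑ i, z i * g i = n

/-!
A factorization whose largest coordinate `M` is at least `g₀²` can be rearranged, without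
changing `n`, so that its first coordinate is at least `M`: if the maximum sits at `j ≠ 0`,
trade `g₀ q` copies of `g_j` for `q g_j` copies of `g₀`, where `q = ⌊M / g₀⌋ ≥ g₀`; since
`g_j > g₀` this gives `z₀ ≥ q (g₀ + 1) > M`. Adding or removing one copy of `g₀` then moves the
maximum between `n - g₀` and `n` by exactly one. Every factorization of `n > g₀² ∑ gᵢ` has
maximum above `g₀²`, because `n ≤ (max z) ∑ gᵢ`, so the rearrangement always applies.
-/

open Finset

theorem isFactorization_sum {k : ℕ} (g z : Fin k → ℕ) : IsFactorization g (∑ i, z i * g i) z :=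
  rfl

namespace IsFactorization

variable {k : ℕ} {g : Fin k → ℕ} {n : ℕ} {z : Fin k → ℕ}

theorem add_single (hz : IsFactorization g n z) (j : Fin k) (c : ℕ) :
    IsFactorization g (n + c * g j) (z + Pi.single j c) := by
  simp only [IsFactorization, Pi.add_apply, add_mul, sum_add_distrib, Pi.single_apply,
    ite_mul, zero_mul, sum_ite_eq', mem_univ, if_true]
  rw [hz]

theorem apply_mul_le (hz : IsFactorization g n z) (j : Fin k) : z j * g j ≤ n :=
  hz ▸ single_le_sum (fun i _ => Nat.zero_le (z i * g i)) (mem_univ j)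

theorem sub_single (hz : IsFactorization g n z) {j : Fin k} {c : ℕ} (hc : c ≤ z j) :
    IsFactorization g (n - c * g j) (z - Pi.single j c) := by
  have hle : Pi.single j c ≤ z := fun i => by
    by_cases hij : i = j
    · subst hij; simpa using hc
    · simp [hij]
  have h := (isFactorization_sum g (z - Pi.single j c)).add_single j c
  rw [tsub_add_cancel_of_le hle] at h
  rw [hz.symm.trans h, Nat.add_sub_cancel]
  rfl

theorem le_sup_mul_sum (hz : IsFactorization g n z) : n ≤ univ.sup z * ∑ i, g i := by
  rw [← hz, mul_sum]
  exact sum_le_sum fun i _ => Nat.mul_le_mul_right _ (le_sup (mem_univ i))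

theorem exists_sup_le_apply (hz : IsFactorization g n z) {a : Fin k} (ha : 0 < g a)
    (hmin : ∀ i ≠ a, g a < g i) (hM : g a ^ 2 ≤ univ.sup z) :
    ∃ z', IsFactorization g n z' ∧ univ.sup z ≤ z' a := by
  obtain ⟨j, -, hj⟩ := exists_mem_eq_sup univ (univ_nonempty_iff.mpr ⟨a⟩) z
  by_cases hja : j = a
  · exact ⟨z, hz, hja ▸ hj.le⟩
  set M := univ.sup z
  set q := M / g a
  have hqa : g a ≤ q := (Nat.le_div_iff_mul_le ha).mpr (by nlinarith)
  have hdiv : g a * q + M % g a = M := Nat.div_add_mod M (g a)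
  have hmod : M % g a < g a := Nat.mod_lt M ha
  have hqj : g a * q ≤ z j := by omega
  have hexchange := (hz.sub_single hqj).add_single a (q * g j)
  refine ⟨z - Pi.single j (g a * q) + Pi.single a (q * g j), ?_, ?_⟩
  · convert hexchange using 1
    have := (Nat.mul_le_mul_right (g j) hqj).trans (hz.apply_mul_le j)
    rw [show q * g j * g a = g a * q * g j by ring, Nat.sub_add_cancel this]
  · have : q * (g a + 1) ≤ q * g j := Nat.mul_le_mul_left q (hmin j hja)
    simp only [Pi.add_apply, Pi.single_eq_same]
    nlinarith

theorem exists_sub (hz : IsFactorization g n z) {a : Fin k} (ha : 0 < g a)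
    (hmin : ∀ i ≠ a, g a < g i) (hM : g a ^ 2 ≤ univ.sup z) :
    ∃ w, IsFactorization g (n - g a) w ∧ univ.sup z ≤ univ.sup w + 1 := by
  obtain ⟨z', hz', hz'a⟩ := hz.exists_sup_le_apply ha hmin hM
  have hpos : 1 ≤ z' a := le_trans (by nlinarith) hz'a
  have hle := le_sup (f := z' - Pi.single a 1) (mem_univ a)
  simp only [Pi.sub_apply, Pi.single_eq_same] at hle
  exact ⟨_, by simpa using hz'.sub_single hpos, by omega⟩

theorem exists_add (hz : IsFactorization g n z) {a : Fin k} (ha : 0 < g a)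
    (hmin : ∀ i ≠ a, g a < g i) (hM : g a ^ 2 ≤ univ.sup z) :
    ∃ z', IsFactorization g (n + g a) z' ∧ univ.sup z + 1 ≤ univ.sup z' := by
  obtain ⟨z', hz', hz'a⟩ := hz.exists_sup_le_apply ha hmin hM
  have hle := le_sup (f := z' + Pi.single a 1) (mem_univ a)
  simp only [Pi.add_apply, Pi.single_eq_same] at hle
  exact ⟨_, by simpa using hz'.add_single a 1, by omega⟩

end IsFactorization

theorem stmt3_general {k : ℕ} (g : Fin (k + 1) → ℕ) (hpos : ∀ i, 0 < g i) (hmono : StrictMono g)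
    (n : ℕ) (hbig : n > (g 0) ^ 2 * ∑ i, g i)
    (L : ℕ)
    (hL : IsGreatest {m | ∃ z, IsFactorization g (n - g 0) z ∧ m = Finset.univ.sup z} L) :
    IsGreatest {m | ∃ z, IsFactorization g n z ∧ m = Finset.univ.sup z} (L + 1) := by
  obtain ⟨⟨w, hw, rfl⟩, hmax⟩ := hL
  have hmin : ∀ i ≠ 0, g 0 < g i := fun i hi => hmono (Fin.pos_of_ne_zero hi)
  have hg0 : g 0 ≤ ∑ i, g i := single_le_sum (fun i _ => Nat.zero_le (g i)) (mem_univ 0)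
  have hub : ∀ m ∈ {m | ∃ z, IsFactorization g n z ∧ m = univ.sup z}, m ≤ univ.sup w + 1 := by
    rintro _ ⟨z, hz, rfl⟩
    have hsq : g 0 ^ 2 < univ.sup z :=
      Nat.lt_of_mul_lt_mul_right (hbig.trans_le hz.le_sup_mul_sum)
    obtain ⟨w', hw', hsup⟩ := hz.exists_sub (hpos 0) hmin hsq.le
    exact hsup.trans (Nat.add_le_add_right (hmax ⟨w', hw', rfl⟩) 1)
  have hsq : g 0 ^ 2 ≤ univ.sup w := by
    have : g 0 ^ 2 * ∑ i, g i < (univ.sup w + 1) * ∑ i, g i := by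
      have := hw.le_sup_mul_sum
      rw [add_mul, one_mul]; omega
    exact Nat.lt_succ_iff.mp (Nat.lt_of_mul_lt_mul_right this)
  obtain ⟨z, hz, hsup⟩ := hw.exists_add (hpos 0) hmin hsq
  rw [Nat.sub_add_cancel (by nlinarith)] at hz
  exact ⟨⟨z, hz, le_antisymm hsup (hub _ ⟨z, hz, rfl⟩)⟩, hub⟩

theorem stmt3 {k : ℕ} (g : Fin (k + 1) → ℕ) (hpos : ∀ i, 0 < g i) (hmono : StrictMono g)
    (n : ℕ) (hn : ∃ z, IsFactorization g n z) (hbig : n > (g 0) ^ 2 * ∑ i, g i)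
    (L : ℕ)
    (hL : IsGreatest {m | ∃ z, IsFactorization g (n - g 0) z ∧ m = Finset.univ.sup z} L) :
    IsGreatest {m | ∃ z, IsFactorization g n z ∧ m = Finset.univ.sup z} (L + 1) :=
  stmt3_general g hpos hmono n hbig L hL
end

section
/- Let S be a numerical semigroup generated by g_1, ..., g_k and g = g_1 + ... + g_k. For all n in S with n > g^2, the minimum infinity-length of factorizations satisfies ℓ_∞^m(n) = ℓ_∞^m(n - g) + 1. -/
open Finset Function

theorem Finset.sum_update_mul_add {ι R : Type*} [Fintype ι] [DecidableEq ι] [Semiring R]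
    (f g : ι → R) (j : ι) (b : R) :
    ∑ x, update f j b x * g x + f j * g j = ∑ x, f x * g x + b * g j := by
  rw [← add_sum_erase _ _ (mem_univ j), ← add_sum_erase _ (fun x => f x * g x) (mem_univ j),
    sum_congr rfl fun x hx => by rw [update_of_ne (ne_of_mem_erase hx)]]
  simp only [update_self]
  abel

namespace IsFactorization

variable {k : ℕ} {g : Fin k → ℕ} {n : ℕ} {z : Fin k → ℕ}

lemma univ_nonempty (h : IsFactorization g n z) (hn : n ≠ 0) : (univ : Finset (Fin k)).Nonempty :=
  let ⟨i, _, _⟩ := exists_ne_zero_of_sum_ne_zero (h ▸ hn : ∑ i, z i * g i ≠ 0)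
  ⟨i, mem_univ i⟩

lemma add_one (h : IsFactorization g n z) : IsFactorization g (n + ∑ i, g i) (z + 1) := by
  simp only [IsFactorization, Pi.add_apply, Pi.one_apply, add_one_mul, sum_add_distrib]
  rw [h]

lemma sub_of_add_one (h : IsFactorization g n (z + 1)) : IsFactorization g (n - ∑ i, g i) z := by
  have hz : IsFactorization g (∑ i, z i * g i) z := rfl
  rw [← h, hz.add_one, Nat.add_sub_cancel]
  exact hz

lemma exchange {i j : Fin k} (h : IsFactorization g n z) (hij : i ≠ j) (hle : g j ≤ z i) :
    IsFactorization g n (update (update z i (z i - g j)) j (z j + g i)) := by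
  have h₁ := sum_update_mul_add (update z i (z i - g j)) g j (z j + g i)
  have h₂ := sum_update_mul_add z g i (z i - g j)
  have hi : (z i - g j) * g i + g j * g i = z i * g i := by
    rw [← add_mul, Nat.sub_add_cancel hle]
  rw [update_of_ne hij.symm] at h₁
  unfold IsFactorization at h ⊢
  linarith

lemma exists_lt_of_sq_lt (h : IsFactorization g n z) (hn : (∑ i, g i) ^ 2 < n) :
    ∃ i, ∑ j, g j < z i ∧ 0 < g i := by
  rw [sq, mul_sum, ← h] at hn
  obtain ⟨i, -, hi⟩ := exists_lt_of_sum_lt hn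
  exact ⟨i, lt_of_mul_lt_mul_right hi (Nat.zero_le _),
    Nat.pos_of_ne_zero fun h0 => by simp [h0] at hi⟩

lemma exists_card_zero_lt {j : Fin k} (h : IsFactorization g n z) (hn : (∑ i, g i) ^ 2 < n)
    (hj : z j = 0) :
    ∃ w, IsFactorization g n w ∧ #{x | w x = 0} < #{x | z x = 0} ∧ univ.sup w ≤ univ.sup z := by
  obtain ⟨i, hzi, hgi_pos⟩ := h.exists_lt_of_sq_lt hn
  have hle_sum : ∀ x, g x ≤ ∑ x, g x := fun x =>
    single_le_sum (fun x _ => Nat.zero_le _) (mem_univ x)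
  have hgi := hle_sum i
  have hgj := hle_sum j
  have hij : i ≠ j := by rintro rfl; omega
  have hzi_le : z i ≤ univ.sup z := le_sup (mem_univ i)
  refine ⟨_, h.exchange hij (hgj.trans hzi.le), card_lt_card ?_, Finset.sup_le fun x _ => ?_⟩
  · refine (ssubset_iff_of_subset fun x => ?_).2 ⟨j, by simp [hj], by simp [hgi_pos.ne']⟩
    simp only [mem_filter, mem_univ, true_and, update_apply]
    split_ifs <;> omega
  · simp only [update_apply]
    split_ifs
    · omega
    · omega
    · exact le_sup (mem_univ x)

lemma exists_forall_pos (h : IsFactorization g n z) (hn : (∑ i, g i) ^ 2 < n) :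
    ∃ w, IsFactorization g n w ∧ (∀ i, 0 < w i) ∧ univ.sup w ≤ univ.sup z := by
  induction hc : #{x | z x = 0} using Nat.strong_induction_on generalizing z with
  | _ c ih =>
    by_cases hpos : ∀ i, 0 < z i
    · exact ⟨z, h, hpos, le_rfl⟩
    push Not at hpos
    obtain ⟨j, hj⟩ := hpos
    obtain ⟨w, hw, hlt, hsup⟩ := h.exists_card_zero_lt hn (Nat.le_zero.mp hj)
    obtain ⟨v, hv, hvpos, hvsup⟩ := ih _ (hc ▸ hlt) hw rfl
    exact ⟨v, hv, hvpos, hvsup.trans hsup⟩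

lemma exists_sub_add_one_le (h : IsFactorization g n z) (hn : (∑ i, g i) ^ 2 < n) :
    ∃ v, IsFactorization g (n - ∑ i, g i) v ∧ univ.sup v + 1 ≤ univ.sup z := by
  obtain ⟨w, hw, hpos, hsup⟩ := h.exists_forall_pos hn
  have hw1 : w - 1 + 1 = w := funext fun i => Nat.sub_add_cancel (hpos i)
  refine ⟨w - 1, (hw1 ▸ hw).sub_of_add_one, ?_⟩
  rw [Finset.sup_add (hw.univ_nonempty (by omega))]
  exact (congrArg (univ.sup ·) hw1).le.trans hsup

end IsFactorization

theorem stmt6_general {k : ℕ} (g : Fin k → ℕ)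
    (n : ℕ) (hbig : n > (∑ i, g i) ^ 2)
    (L : ℕ)
    (hL : IsLeast {m | ∃ z, IsFactorization g (n - ∑ i, g i) z ∧ m = Finset.univ.sup z} L) :
    IsLeast {m | ∃ z, IsFactorization g n z ∧ m = Finset.univ.sup z} (L + 1) := by
  obtain ⟨⟨w, hw, rfl⟩, hmin⟩ := hL
  have hG : ∑ i, g i ≤ n := (Nat.le_self_pow two_ne_zero _).trans hbig.le
  have hw' : IsFactorization g n (w + 1) := Nat.sub_add_cancel hG ▸ hw.add_one
  refine ⟨⟨w + 1, hw', Finset.sup_add (hw'.univ_nonempty (by omega)) w 1⟩, ?_⟩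
  rintro _ ⟨z, hz, rfl⟩
  obtain ⟨v, hv, hle⟩ := hz.exists_sub_add_one_le hbig
  exact (Nat.add_le_add_right (hmin ⟨v, hv, rfl⟩) 1).trans hle

theorem stmt6 {k : ℕ} (g : Fin k → ℕ) (hpos : ∀ i, 0 < g i)
    (n : ℕ) (hn : ∃ z, IsFactorization g n z) (hbig : n > (∑ i, g i) ^ 2)
    (L : ℕ)
    (hL : IsLeast {m | ∃ z, IsFactorization g (n - ∑ i, g i) z ∧ m = Finset.univ.sup z} L) :
    IsLeast {m | ∃ z, IsFactorization g n z ∧ m = Finset.univ.sup z} (L + 1) :=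
  stmt6_general g n hbig L hL
end

section
/- Let x = 40 = 2^3 · 5 in the arithmetical congruence monoid M_{4,6}. For every k ≥ 1 and every n with k^2 ≤ n < (k+1)^2, the maximum number of distinct atoms appearing in a factorization of x^n in M_{4,6} equals k + 1. In particular, ℓ_0^M(40^n) ∈ Θ(n^{1/2}). -/
/-- The arithmetical congruence monoid `M_{4,6}` as a subset of `ℕ`. -/
def M46 : Set ℕ := {n | n = 1 ∨ (1 ≤ n ∧ n % 6 = 4)}

/-- An atom (irreducible element) of `M_{4,6}`. -/
def IsAtom46 (u : ℕ) : Prop :=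
  u ∈ M46 ∧ 1 < u ∧ ∀ v w, v ∈ M46 → w ∈ M46 → u = v * w → v = 1 ∨ w = 1

/-!
An atom of `M_{4,6}` dividing `40 ^ n = 2 ^ (3 n) * 5 ^ n` is `4` or `2 * 5 ^ b` with `b` odd: any
other `2 ^ a * 5 ^ b` in the monoid splits off a factor `4` or `10`. The atoms `2 * 5 ^ b` occurring
in a factorization of `40 ^ n` have distinct odd exponents with sum at most `n`, and `r` distinct
odd numbers sum to at least `r ^ 2`, so at most `k` of them occur besides `4`. Conversely the atoms
`2 * 5 ^ (2 i + 1)`, `i < k`, times `4 ^ (k choose 2)` multiply to `10 ^ (k ^ 2)`, and the rest of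
`40 ^ n` is made up of copies of `10` and `4`.
-/

namespace Finset

theorem sum_range_card_le_sum (s : Finset ℕ) : ∑ i ∈ range #s, i ≤ ∑ x ∈ s, x := by
  have h := sum_range_le_sum (s := s.map Nat.castEmbedding) (c := 0) (by simp)
  simp only [card_map, zero_add, sum_map, Nat.castEmbedding_apply] at h
  rwa [← Nat.cast_sum, ← Nat.cast_sum, Nat.cast_le] at h

theorem sq_card_le_sum_of_odd (s : Finset ℕ) (hs : ∀ b ∈ s, Odd b) : #s ^ 2 ≤ ∑ b ∈ s, b := by
  have hhalf : Set.InjOn (· / 2) s := fun x hx y hy h => by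
    have := hs x hx; have := hs y hy; simp only at h; grind
  have hsum : ∑ b ∈ s, b = 2 * ∑ j ∈ s.image (· / 2), j + #s := by
    rw [sum_image hhalf, mul_sum, card_eq_sum_ones, ← sum_add_distrib]
    refine sum_congr rfl fun b hb => ?_
    have := hs b hb; grind
  have hlow : ∑ i ∈ range #s, i ≤ ∑ j ∈ s.image (· / 2), j :=
    card_image_of_injOn hhalf ▸ sum_range_card_le_sum _
  have hgauss := sum_range_id_mul_two #s
  have := Nat.mul_sub_one #s #s
  have := Nat.le_mul_self #s
  rw [sq]
  omega

end Finset

theorem two_pow_mod_three (m : ℕ) : 2 ^ m % 3 = if Even m then 1 else 2 := by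
  obtain ⟨j, rfl | rfl⟩ := Nat.even_or_odd' m
  · simp [pow_mul, Nat.pow_mod]
  · simp [pow_succ, pow_mul, Nat.mul_mod, Nat.pow_mod]

theorem two_pow_mul_five_pow_mod_six (a b : ℕ) :
    2 ^ a * 5 ^ b % 6 = 4 ↔ a ≠ 0 ∧ Even (a + b) := by
  have h2 : 2 ^ a * 5 ^ b % 2 = 0 ↔ a ≠ 0 := by
    rcases a with _ | a
    · simp [Nat.pow_mod]
    · simp [pow_succ, Nat.mul_right_comm _ 2]
  have h3 : 2 ^ a * 5 ^ b % 3 = 1 ↔ Even (a + b) := by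
    rw [Nat.mul_mod, Nat.pow_mod 5, ← Nat.mul_mod, ← pow_add, two_pow_mod_three]
    split_ifs with h <;> simp [h]
  rw [← h2, ← h3]
  omega

theorem two_pow_mul_five_pow_mem_M46 {a b : ℕ} (ha : a ≠ 0) (hab : Even (a + b)) :
    2 ^ a * 5 ^ b ∈ M46 :=
  Or.inr ⟨Nat.one_le_iff_ne_zero.mpr (by positivity),
    (two_pow_mul_five_pow_mod_six a b).mpr ⟨ha, hab⟩⟩

theorem one_lt_two_pow_mul_five_pow {a : ℕ} (b : ℕ) (ha : a ≠ 0) : 1 < 2 ^ a * 5 ^ b := by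
  have := Nat.one_lt_two_pow ha
  have := Nat.one_le_pow b 5 (by norm_num)
  nlinarith

theorem four_le_and_even_of_mem_M46 {v : ℕ} (hv : v ∈ M46) (hv1 : v ≠ 1) : 4 ≤ v ∧ 2 ∣ v := by
  rcases hv with h | h
  · exact absurd h hv1
  · omega

theorem isAtom46_four : IsAtom46 4 := by
  refine ⟨Or.inr ⟨by norm_num, by norm_num⟩, by norm_num, fun v w hv hw h => ?_⟩
  by_contra! hvw
  have := four_le_and_even_of_mem_M46 hv hvw.1
  have := four_le_and_even_of_mem_M46 hw hvw.2
  nlinarith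

theorem isAtom46_two_mul_five_pow {b : ℕ} (hb : Odd b) : IsAtom46 (2 * 5 ^ b) := by
  have hmem := two_pow_mul_five_pow_mem_M46 (a := 1) (b := b) one_ne_zero (by grind)
  rw [pow_one] at hmem
  refine ⟨hmem, by simpa using one_lt_two_pow_mul_five_pow b one_ne_zero,
    fun v w hv hw h => ?_⟩
  by_contra! hvw
  obtain ⟨-, v', rfl⟩ := four_le_and_even_of_mem_M46 hv hvw.1
  obtain ⟨-, w', rfl⟩ := four_le_and_even_of_mem_M46 hw hvw.2
  have h5 : Odd (5 ^ b) := Odd.pow (by decide)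
  grind

theorem IsAtom46.eq_four_or_two_mul_five_pow {u α β : ℕ} (hu : IsAtom46 u)
    (hdvd : u ∣ 2 ^ α * 5 ^ β) : u = 4 ∨ ∃ b, Odd b ∧ u = 2 * 5 ^ b := by
  obtain ⟨x, y, hx, hy, rfl⟩ := Nat.dvd_mul.mp hdvd
  obtain ⟨a, -, rfl⟩ := (Nat.dvd_prime_pow Nat.prime_two).mp hx
  obtain ⟨b, -, rfl⟩ := (Nat.dvd_prime_pow Nat.prime_five).mp hy
  obtain ⟨hu_mem, hu_one, hu_irred⟩ := hu
  obtain ⟨ha, hab⟩ := (two_pow_mul_five_pow_mod_six a b).mp <|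
    (hu_mem.resolve_left hu_one.ne').2
  have no_split : ∀ a' b' a'' b'', a' ≠ 0 → Even (a' + b') → a'' ≠ 0 → Even (a'' + b'') →
      2 ^ a * 5 ^ b ≠ 2 ^ a' * 5 ^ b' * (2 ^ a'' * 5 ^ b'') := by
    intro a' b' a'' b'' h' e' h'' e'' h
    rcases hu_irred _ _ (two_pow_mul_five_pow_mem_M46 h' e') (two_pow_mul_five_pow_mem_M46 h'' e'')
      h with h1 | h1
    · exact (one_lt_two_pow_mul_five_pow b' h').ne' h1
    · exact (one_lt_two_pow_mul_five_pow b'' h'').ne' h1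
  match a, b with
  | 0, _ => exact absurd rfl ha
  | 1, b => exact Or.inr ⟨b, by grind, by ring⟩
  | 2, 0 => exact Or.inl rfl
  | 2, b + 1 =>
    exact absurd (by ring) (no_split 1 1 1 b one_ne_zero even_two one_ne_zero (by grind))
  | a + 3, b =>
    exact absurd (by ring) (no_split 2 0 (a + 1) b two_ne_zero even_two (by omega) (by grind))

open Finset

theorem prod_two_mul_five_pow_odd_mul_four_pow (k : ℕ) :
    ((List.range k).map fun i => 2 * 5 ^ (2 * i + 1)).prod * 4 ^ k.choose 2 = 10 ^ k ^ 2 := by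
  induction k with
  | zero => simp
  | succ k ih =>
    have hstep : 2 * 5 ^ (2 * k + 1) * 4 ^ k = 10 ^ (2 * k + 1) := by
      rw [show (4 : ℕ) = 2 ^ 2 by rfl, show (10 : ℕ) = 2 * 5 by rfl, ← pow_mul, mul_pow]
      ring
    rw [List.range_succ, List.map_append, List.prod_append, Nat.choose_succ_succ',
      Nat.choose_one_right, pow_add, List.map_singleton, List.prod_singleton]
    calc _ = ((List.range k).map fun i => 2 * 5 ^ (2 * i + 1)).prod * 4 ^ k.choose 2 *
          (2 * 5 ^ (2 * k + 1) * 4 ^ k) := by ring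
      _ = 10 ^ (k + 1) ^ 2 := by rw [ih, hstep, ← pow_add]; ring_nf

theorem sq_card_erase_four_le {n : ℕ} {L : List ℕ} (hL : ∀ u ∈ L, IsAtom46 u)
    (hprod : L.prod = 40 ^ n) : #(L.toFinset.erase 4) ^ 2 ≤ n := by
  set S := L.toFinset.erase 4
  have h40 : (40 : ℕ) ^ n = 2 ^ (3 * n) * 5 ^ n := by
    rw [show (40 : ℕ) = 2 ^ 3 * 5 by rfl, mul_pow, ← pow_mul]
  have hS : ∀ u ∈ S, ∃ b, Odd b ∧ u = 2 * 5 ^ b := by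
    intro u hu
    obtain ⟨hu4, huL⟩ := mem_erase.mp hu
    have huL := List.mem_toFinset.mp huL
    have hdvd : u ∣ 2 ^ (3 * n) * 5 ^ n := h40 ▸ hprod ▸ List.dvd_prod huL
    exact ((hL u huL).eq_four_or_two_mul_five_pow hdvd).resolve_left hu4
  choose! e he_odd he_eq using hS
  have he_inj : Set.InjOn e S := fun u hu v hv h => by rw [he_eq u hu, he_eq v hv, h]
  have hdvd : 2 ^ #S * 5 ^ ∑ u ∈ S, e u ∣ 2 ^ (3 * n) * 5 ^ n :=
    calc 2 ^ #S * 5 ^ ∑ u ∈ S, e u = ∏ u ∈ S, u := by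
          rw [prod_congr rfl he_eq, prod_mul_distrib, prod_const, prod_pow_eq_pow_sum]
      _ ∣ ∏ u ∈ L.toFinset, u := prod_dvd_prod_of_subset _ _ _ (erase_subset _ _)
      _ ∣ L.prod := by simpa using Multiset.toFinset_prod_dvd_prod (L : Multiset ℕ)
      _ = _ := hprod.trans h40
  have hsum : ∑ u ∈ S, e u ≤ n := by
    have h5 := (Nat.Coprime.pow _ _ (by norm_num : Nat.Coprime 5 2)).dvd_of_dvd_mul_left
      (dvd_of_mul_left_dvd hdvd)
    exact (Nat.pow_dvd_pow_iff_le_right (by norm_num)).mp h5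
  calc #S ^ 2 = #(S.image e) ^ 2 := by rw [card_image_of_injOn he_inj]
    _ ≤ ∑ b ∈ S.image e, b := sq_card_le_sum_of_odd _ (by simpa using he_odd)
    _ = ∑ u ∈ S, e u := sum_image he_inj
    _ ≤ n := hsum

theorem exists_atom_factorization_forty_pow {k n : ℕ} (hk : 1 ≤ k) (hn : k ^ 2 ≤ n) :
    ∃ L : List ℕ, (∀ u ∈ L, IsAtom46 u) ∧ L.prod = 40 ^ n ∧ k + 1 ≤ #L.toFinset := by
  set f : ℕ → ℕ := fun i => 2 * 5 ^ (2 * i + 1) with hf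
  set L := (List.range k).map f ++ List.replicate (n - k ^ 2) 10 ++
    List.replicate (k.choose 2 + n) 4
  refine ⟨L, ?_, ?_, ?_⟩
  · simp only [L, List.mem_append, List.mem_map, List.mem_replicate]
    rintro u ((⟨i, -, rfl⟩ | ⟨-, rfl⟩) | ⟨-, rfl⟩)
    · exact isAtom46_two_mul_five_pow (odd_two_mul_add_one i)
    · simpa using isAtom46_two_mul_five_pow odd_one
    · exact isAtom46_four
  · rw [List.prod_append, List.prod_append, List.prod_replicate, List.prod_replicate, pow_add]
    calc _ = (((List.range k).map f).prod * 4 ^ k.choose 2) * 10 ^ (n - k ^ 2) * 4 ^ n := by ring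
      _ = 40 ^ n := by
        rw [prod_two_mul_five_pow_odd_mul_four_pow, ← pow_add, Nat.add_sub_cancel' hn, ← mul_pow]
        rfl
  · have hf_inj : f.Injective := fun i j h => by
      have := Nat.pow_right_injective (by norm_num : 2 ≤ 5) (Nat.eq_of_mul_eq_mul_left two_pos h)
      omega
    have hf_ne : 4 ∉ (range k).image f := by
      simp only [mem_image, not_exists, not_and]
      intro i _ h
      simp only [hf] at h
      have : 5 ≤ 5 ^ (2 * i + 1) := Nat.le_self_pow (by omega) 5
      omega
    have hsub : insert 4 ((range k).image f) ⊆ L.toFinset := by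
      have : 0 < n := lt_of_lt_of_le (Nat.pow_pos hk) hn
      intro u hu
      simp only [mem_insert, mem_image, mem_range] at hu
      simp only [L, List.mem_toFinset, List.mem_append, List.mem_map, List.mem_range,
        List.mem_replicate]
      grind
    calc k + 1 = #(insert 4 ((range k).image f)) := by
          rw [card_insert_of_notMem hf_ne, card_image_of_injective _ hf_inj, card_range]
      _ ≤ #L.toFinset := card_le_card hsub

theorem stmt15 (k : ℕ) (hk : 1 ≤ k) (n : ℕ) (h1 : k ^ 2 ≤ n) (h2 : n < (k + 1) ^ 2) :
    IsGreatest {m | ∃ L : List ℕ, (∀ u ∈ L, IsAtom46 u) ∧ L.prod = 40 ^ n ∧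
      m = L.toFinset.card} (k + 1) := by
  have upper : ∀ L : List ℕ, (∀ u ∈ L, IsAtom46 u) → L.prod = 40 ^ n → #L.toFinset ≤ k + 1 := by
    intro L hL hprod
    have hS : #(L.toFinset.erase 4) < k + 1 :=
      (Nat.pow_lt_pow_iff_left two_ne_zero).mp ((sq_card_erase_four_le hL hprod).trans_lt h2)
    have := pred_card_le_card_erase (s := L.toFinset) (a := 4)
    omega
  refine ⟨?_, fun m ⟨L, hL, hprod, hm⟩ => hm ▸ upper L hL hprod⟩
  obtain ⟨L, hL, hprod, hcard⟩ := exists_atom_factorization_forty_pow hk h1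
  exact ⟨L, hL, hprod, le_antisymm hcard (upper L hL hprod)⟩
end

section
/- Let x = 70 = 2 · 5 · 7 in the arithmetical congruence monoid M_{4,6}. Then the maximum number ℓ_0^M(x^n) of distinct atoms in a factorization of x^n grows like Θ(n^{2/3}): there are positive constants c_1, c_2 such that c_1 n^{2/3} ≤ ℓ_0^M(70^n) ≤ c_2 n^{2/3} for all sufficiently large n. -/
lemma mem_M46_iff {n : ℕ} : n ∈ M46 ↔ n = 1 ∨ n % 6 = 4 := by
  simp only [M46, Set.mem_ofPred_eq]
  omega

lemma two_five_seven_mod_six_eq_four_iff (a b c : ℕ) :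
    2 ^ a * 5 ^ b * 7 ^ c % 6 = 4 ↔ 1 ≤ a ∧ Even (a + b) := by
  have hmod2 : Even (2 ^ a * 5 ^ b * 7 ^ c) ↔ 1 ≤ a := by
    simp [Nat.even_mul, Nat.even_pow, Nat.one_le_iff_ne_zero, show ¬Even 5 by decide,
      show ¬Even 7 by decide]
  have hmod3 : ((2 ^ a * 5 ^ b * 7 ^ c : ℕ) : ZMod 3) = (-1) ^ (a + b) := by
    push_cast
    rw [show (2 : ZMod 3) = -1 by decide, show (5 : ZMod 3) = -1 by decide,
      show (7 : ZMod 3) = 1 by decide, one_pow, mul_one, pow_add]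
  rw [← hmod2, ← neg_one_pow_eq_one_iff_even (R := ZMod 3) (n := a + b) (by decide), ← hmod3,
    ← Nat.cast_one, ZMod.natCast_eq_natCast_iff', Nat.even_iff]
  omega

lemma factorization_two_five_seven (a b c : ℕ) :
    (2 ^ a * 5 ^ b * 7 ^ c).factorization 2 = a ∧ (2 ^ a * 5 ^ b * 7 ^ c).factorization 5 = b ∧
      (2 ^ a * 5 ^ b * 7 ^ c).factorization 7 = c := by
  simp [Nat.factorization_mul, Nat.factorization_pow, Nat.Prime.factorization,
    Nat.prime_two, show Nat.Prime 5 by norm_num, show Nat.Prime 7 by norm_num]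

lemma two_five_seven_injective {a b c a' b' c' : ℕ}
    (h : 2 ^ a * 5 ^ b * 7 ^ c = 2 ^ a' * 5 ^ b' * 7 ^ c') : a = a' ∧ b = b' ∧ c = c' := by
  obtain ⟨h2, h5, h7⟩ := factorization_two_five_seven a b c
  obtain ⟨h2', h5', h7'⟩ := factorization_two_five_seven a' b' c'
  rw [h] at h2 h5 h7
  exact ⟨h2.symm.trans h2', h5.symm.trans h5', h7.symm.trans h7'⟩

lemma exists_eq_two_five_seven_of_dvd {v a b c : ℕ} (h : v ∣ 2 ^ a * 5 ^ b * 7 ^ c) :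
    ∃ a' b' c', v = 2 ^ a' * 5 ^ b' * 7 ^ c' := by
  obtain ⟨xy, z, hxy, hz, rfl⟩ := Nat.dvd_mul.1 h
  obtain ⟨x, y, hx, hy, rfl⟩ := Nat.dvd_mul.1 hxy
  obtain ⟨a', -, rfl⟩ := (Nat.dvd_prime_pow Nat.prime_two).1 hx
  obtain ⟨b', -, rfl⟩ := (Nat.dvd_prime_pow (by norm_num)).1 hy
  obtain ⟨c', -, rfl⟩ := (Nat.dvd_prime_pow (by norm_num)).1 hz
  exact ⟨a', b', c', rfl⟩

lemma two_five_seven_mem_M46_ne_one_iff (a b c : ℕ) :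
    2 ^ a * 5 ^ b * 7 ^ c ∈ M46 ∧ 2 ^ a * 5 ^ b * 7 ^ c ≠ 1 ↔ 1 ≤ a ∧ Even (a + b) := by
  rw [mem_M46_iff, ← two_five_seven_mod_six_eq_four_iff a b c]
  omega

lemma isAtom46_two_five_seven_iff (a b c : ℕ) :
    IsAtom46 (2 ^ a * 5 ^ b * 7 ^ c) ↔ (a = 2 ∧ b = 0) ∨ (a = 1 ∧ Odd b) := by
  have hpos : 0 < 2 ^ a * 5 ^ b * 7 ^ c := by positivity
  rw [IsAtom46, Nat.odd_iff]
  constructor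
  · rintro ⟨hmem, hgt, hirr⟩
    obtain ⟨ha, hab⟩ := (two_five_seven_mem_M46_ne_one_iff a b c).1 ⟨hmem, hgt.ne'⟩
    rw [Nat.even_iff] at hab
    by_contra hne
    -- the factorization `u = 4 * (u / 4)` if `a ≥ 3`, and `u = 10 * (u / 10)` otherwise
    obtain ⟨a₁, b₁, a₂, b₂, rfl, rfl, h₁, h₂⟩ : ∃ a₁ b₁ a₂ b₂, a₁ + a₂ = a ∧ b₁ + b₂ = b ∧
        (1 ≤ a₁ ∧ (a₁ + b₁) % 2 = 0) ∧ (1 ≤ a₂ ∧ (a₂ + b₂) % 2 = 0) := by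
      rcases Nat.lt_or_ge a 3 with h | h
      · exact ⟨1, 1, 1, b - 1, by omega, by omega, by omega, by omega⟩
      · exact ⟨2, 0, a - 2, b, by omega, by omega, by omega, by omega⟩
    rw [← Nat.even_iff] at h₁ h₂
    have hv := (two_five_seven_mem_M46_ne_one_iff a₁ b₁ 0).2 h₁
    have hw := (two_five_seven_mem_M46_ne_one_iff a₂ b₂ c).2 h₂
    have := hirr _ _ hv.1 hw.1 (by ring)
    tauto
  · intro h
    have hab : 1 ≤ a ∧ Even (a + b) := by rw [Nat.even_iff]; omega
    obtain ⟨hmem, hne⟩ := (two_five_seven_mem_M46_ne_one_iff a b c).2 hab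
    refine ⟨hmem, by omega, fun v w hv hw hvw => ?_⟩
    by_contra! hvw1
    obtain ⟨a₁, b₁, c₁, rfl⟩ := exists_eq_two_five_seven_of_dvd (Dvd.intro w hvw.symm)
    obtain ⟨a₂, b₂, c₂, rfl⟩ := exists_eq_two_five_seven_of_dvd (Dvd.intro_left _ hvw.symm)
    obtain ⟨ha, hb, -⟩ := two_five_seven_injective (a' := a₁ + a₂) (b' := b₁ + b₂)
      (c' := c₁ + c₂) (hvw.trans (by ring))
    have h₁ := (two_five_seven_mem_M46_ne_one_iff a₁ b₁ c₁).1 ⟨hv, hvw1.1⟩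
    have h₂ := (two_five_seven_mem_M46_ne_one_iff a₂ b₂ c₂).1 ⟨hw, hvw1.2⟩
    rw [Nat.even_iff] at h₁ h₂
    omega

lemma seventy_pow (n : ℕ) : 70 ^ n = 2 ^ n * 5 ^ n * 7 ^ n := by
  rw [show 70 = 2 * 5 * 7 from rfl, mul_pow, mul_pow]

lemma injOn_factorization_five_seven (n : ℕ) :
    Set.InjOn (fun u => (u.factorization 5, u.factorization 7)) {u | IsAtom46 u ∧ u ∣ 70 ^ n} := by
  rintro _ ⟨hu, hun⟩ _ ⟨hv, hvn⟩ h
  rw [seventy_pow] at hun hvn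
  obtain ⟨a, b, c, rfl⟩ := exists_eq_two_five_seven_of_dvd hun
  obtain ⟨a', b', c', rfl⟩ := exists_eq_two_five_seven_of_dvd hvn
  simp only [factorization_two_five_seven, Prod.mk.injEq] at h
  obtain ⟨rfl, rfl⟩ := h
  rw [isAtom46_two_five_seven_iff, Nat.odd_iff] at hu hv
  obtain rfl : a = a' := by omega
  rfl

lemma card_mul_le_sq_mul_add_sum (s : Finset (ℕ × ℕ)) (t : ℕ) :
    s.card * t ≤ t ^ 2 * t + ∑ q ∈ s, (q.1 + q.2) := by
  rw [← Finset.card_filter_add_card_filter_not (fun q => q.1 + q.2 < t), add_mul]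
  gcongr ?_ + ?_
  · have hsub : s.filter (fun q => q.1 + q.2 < t) ⊆ Finset.range t ×ˢ Finset.range t := by
      intro q hq
      simp only [Finset.mem_filter] at hq
      simp only [Finset.mem_product, Finset.mem_range]
      omega
    have := Finset.card_le_card hsub
    rw [Finset.card_product, Finset.card_range, ← sq] at this
    gcongr
  · calc _ ≤ ∑ q ∈ s.filter (fun q => ¬q.1 + q.2 < t), (q.1 + q.2) := by
          rw [← smul_eq_mul]
          exact Finset.card_nsmul_le_sum _ _ _ fun q hq => by
            simp only [Finset.mem_filter] at hq; omega
      _ ≤ _ := Finset.sum_le_sum_of_subset (Finset.filter_subset _ _)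

lemma sum_factorization_le_of_prod_dvd {T : Finset ℕ} {m : ℕ} (hT : ∀ u ∈ T, u ≠ 0) (hm : m ≠ 0)
    (hdvd : ∏ u ∈ T, u ∣ m) (p : ℕ) : ∑ u ∈ T, u.factorization p ≤ m.factorization p := by
  have hprod : ∏ u ∈ T, u ≠ 0 := Finset.prod_ne_zero_iff.2 hT
  have := (Nat.factorization_le_iff_dvd hprod hm).2 hdvd p
  rwa [Nat.factorization_prod hT, Finset.sum_apply'] at this

lemma card_mul_le_of_prod_dvd {n : ℕ} {T : Finset ℕ} (hT : ∀ u ∈ T, IsAtom46 u)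
    (hdvd : ∏ u ∈ T, u ∣ 70 ^ n) (t : ℕ) : T.card * t ≤ t ^ 3 + 2 * n := by
  have hT0 : ∀ u ∈ T, u ≠ 0 := fun u hu => by have := (hT u hu).2.1; omega
  obtain ⟨-, h5, h7⟩ := factorization_two_five_seven n n n
  have hsum5 := sum_factorization_le_of_prod_dvd hT0 (by positivity) hdvd 5
  have hsum7 := sum_factorization_le_of_prod_dvd hT0 (by positivity) hdvd 7
  rw [seventy_pow, h5] at hsum5
  rw [seventy_pow, h7] at hsum7
  have hinj : Set.InjOn (fun u : ℕ => (u.factorization 5, u.factorization 7)) T :=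
    (injOn_factorization_five_seven n).mono fun u (hu : u ∈ T) =>
      (⟨hT u hu, (Finset.dvd_prod_of_mem id hu).trans hdvd⟩ : IsAtom46 u ∧ u ∣ 70 ^ n)
  calc T.card * t = (T.image fun u : ℕ => (u.factorization 5, u.factorization 7)).card * t := by
        rw [Finset.card_image_of_injOn hinj]
    _ ≤ t ^ 2 * t + ∑ u ∈ T, (u.factorization 5 + u.factorization 7) := by
        rw [← Finset.sum_image (f := fun q : ℕ × ℕ => q.1 + q.2) hinj]
        exact card_mul_le_sq_mul_add_sum _ t
    _ ≤ t ^ 3 + 2 * n := by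
        rw [Finset.sum_add_distrib, show t ^ 3 = t ^ 2 * t by ring]
        omega

lemma sum_range_two_mul_add_one (B : ℕ) : ∑ i ∈ Finset.range B, (2 * i + 1) = B ^ 2 := by
  induction B with
  | zero => rfl
  | succ k ih => rw [Finset.sum_range_succ, ih]; ring

lemma exists_atom_factorization_sq_le_card {n B : ℕ} (hB : 2 ≤ B) (hn : B ^ 3 ≤ n) :
    ∃ L : List ℕ, (∀ u ∈ L, IsAtom46 u) ∧ L.prod = 70 ^ n ∧ B ^ 2 ≤ L.toFinset.card := by
  set grid := Finset.range B ×ˢ Finset.range B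
  set φ : ℕ × ℕ → ℕ := fun q => 2 ^ 1 * 5 ^ (2 * q.1 + 1) * 7 ^ q.2
  set s := ∑ q ∈ grid, q.2
  have hφ : Set.InjOn φ grid := fun q _ q' _ h => by
    obtain ⟨-, h5, h7⟩ := two_five_seven_injective h
    exact Prod.ext (by omega) h7
  have hs : 2 * s + B ^ 2 = B ^ 3 := by
    have := Finset.sum_range_id_mul_two B
    obtain ⟨k, rfl⟩ : ∃ k, B = k + 1 := ⟨B - 1, by omega⟩
    simp only [s, grid, Finset.sum_product, Finset.sum_const, Finset.card_range, smul_eq_mul,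
      add_tsub_cancel_right] at this ⊢
    nlinarith
  have hs1 : 1 ≤ s := by nlinarith
  have h5 : ∑ q ∈ grid, (2 * q.1 + 1) = B ^ 3 := by
    simp only [grid, Finset.sum_product, Finset.sum_const, Finset.card_range, smul_eq_mul,
      ← Finset.mul_sum, sum_range_two_mul_add_one]
    ring
  have hprod : ∏ q ∈ grid, φ q = 2 ^ (B ^ 2) * 5 ^ (B ^ 3) * 7 ^ s := by
    simp only [φ, Finset.prod_mul_distrib, Finset.prod_const, Finset.prod_pow_eq_pow_sum, h5]
    rw [Finset.card_product, Finset.card_range, pow_one, sq]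
  -- `n - B ^ 3` tens supply the missing fives; the twos then force exactly `s` atoms `4 * 7 ^ c`,
  -- and the last of them takes the missing sevens
  refine ⟨(grid.image φ).toList ++ List.replicate (n - B ^ 3) (2 ^ 1 * 5 ^ 1 * 7 ^ 0) ++
    List.replicate (s - 1) (2 ^ 2 * 5 ^ 0 * 7 ^ 0) ++ [2 ^ 2 * 5 ^ 0 * 7 ^ (n - s)], ?_, ?_, ?_⟩
  · simp only [List.mem_append, List.mem_replicate, List.mem_singleton, Finset.mem_toList,
      Finset.mem_image]
    rintro u (((⟨q, -, rfl⟩ | ⟨-, rfl⟩) | ⟨-, rfl⟩) | rfl) <;>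
      refine (isAtom46_two_five_seven_iff _ _ _).2 ?_
    exacts [Or.inr ⟨rfl, odd_two_mul_add_one _⟩, Or.inr ⟨rfl, odd_one⟩, Or.inl ⟨rfl, rfl⟩,
      Or.inl ⟨rfl, rfl⟩]
  · rw [List.prod_append, List.prod_append, List.prod_append, Finset.prod_toList,
      Finset.prod_image hφ, hprod, List.prod_replicate, List.prod_replicate, List.prod_singleton,
      seventy_pow]
    simp only [mul_pow, ← pow_mul]
    calc _ = 2 ^ (B ^ 2 + (n - B ^ 3) + 2 * (s - 1) + 2) * 5 ^ (B ^ 3 + (n - B ^ 3)) *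
          7 ^ (s + (n - s)) := by ring
      _ = 2 ^ n * 5 ^ n * 7 ^ n := by congr 3 <;> omega
  · calc B ^ 2 = (grid.image φ).card := by
          rw [Finset.card_image_of_injOn hφ, Finset.card_product, Finset.card_range, sq]
      _ ≤ _ := Finset.card_le_card fun u hu => by simp [hu]

lemma rpow_one_third_pow_three {y : ℝ} (hy : 0 ≤ y) : (y ^ ((1 : ℝ) / 3)) ^ 3 = y := by
  rw [← Real.rpow_natCast, ← Real.rpow_mul hy]
  norm_num

lemma rpow_one_third_sq {y : ℝ} (hy : 0 ≤ y) : (y ^ ((1 : ℝ) / 3)) ^ 2 = y ^ ((2 : ℝ) / 3) := by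
  rw [← Real.rpow_natCast, ← Real.rpow_mul hy]
  norm_num

lemma card_toFinset_le_of_prod_eq {n : ℕ} (hn : 1 ≤ n) {L : List ℕ} (hL : ∀ u ∈ L, IsAtom46 u)
    (hprod : L.prod = 70 ^ n) : (L.toFinset.card : ℝ) ≤ 12 * (n : ℝ) ^ ((2 : ℝ) / 3) := by
  set x := (n : ℝ) ^ ((1 : ℝ) / 3)
  have hx1 : 1 ≤ x := Real.one_le_rpow (by exact_mod_cast hn) (by norm_num)
  set t := ⌈x⌉₊
  have ht : 0 < t := Nat.ceil_pos.2 (by linarith)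
  have hnt : n ≤ t ^ 3 := by
    have : (n : ℝ) ≤ (t : ℝ) ^ 3 := by
      rw [← rpow_one_third_pow_three (Nat.cast_nonneg n)]
      gcongr
      exact Nat.le_ceil x
    exact_mod_cast this
  have hdvd : ∏ u ∈ L.toFinset, u ∣ L.prod := by
    simpa using Multiset.toFinset_prod_dvd_prod (L : Multiset ℕ)
  have hcard : L.toFinset.card ≤ 3 * t ^ 2 := by
    have := card_mul_le_of_prod_dvd (fun u hu => hL u (List.mem_toFinset.1 hu)) (hprod ▸ hdvd) t
    refine Nat.le_of_mul_le_mul_right ?_ ht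
    rw [show 3 * t ^ 2 * t = 3 * t ^ 3 by ring]
    omega
  have ht2 : (t : ℝ) ≤ 2 * x := by linarith [Nat.ceil_lt_add_one (zero_le_one.trans hx1)]
  calc (L.toFinset.card : ℝ) ≤ 3 * (t : ℝ) ^ 2 := by exact_mod_cast hcard
    _ ≤ 3 * (2 * x) ^ 2 := by gcongr
    _ = 12 * (n : ℝ) ^ ((2 : ℝ) / 3) := by rw [← rpow_one_third_sq (Nat.cast_nonneg n)]; ring

lemma exists_atom_factorization_le_card {n : ℕ} (hn : 8 ≤ n) :
    ∃ L : List ℕ, (∀ u ∈ L, IsAtom46 u) ∧ L.prod = 70 ^ n ∧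
      1 / 4 * (n : ℝ) ^ ((2 : ℝ) / 3) ≤ L.toFinset.card := by
  set x := (n : ℝ) ^ ((1 : ℝ) / 3)
  have hx3 : x ^ 3 = n := rpow_one_third_pow_three (Nat.cast_nonneg n)
  have hx2 : 2 ≤ x := le_of_pow_le_pow_left₀ three_ne_zero (by positivity)
    (by rw [hx3]; exact_mod_cast hn)
  set B := ⌊x⌋₊
  have hBx : (B : ℝ) ≤ x := Nat.floor_le (by positivity)
  have hxB : x < B + 1 := Nat.lt_floor_add_one x
  have hB : 2 ≤ B := by
    have : (1 : ℝ) < B := by linarith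
    exact_mod_cast this
  have hBn : B ^ 3 ≤ n := by
    have : (B : ℝ) ^ 3 ≤ n := hx3 ▸ by gcongr
    exact_mod_cast this
  obtain ⟨L, hL, hprod, hcard⟩ := exists_atom_factorization_sq_le_card hB hBn
  refine ⟨L, hL, hprod, ?_⟩
  calc 1 / 4 * (n : ℝ) ^ ((2 : ℝ) / 3) = (x / 2) ^ 2 := by
        rw [← rpow_one_third_sq (Nat.cast_nonneg n)]; ring
    _ ≤ (B : ℝ) ^ 2 := by gcongr; linarith
    _ ≤ L.toFinset.card := by exact_mod_cast hcard

theorem stmt16 :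
    ∃ c₁ c₂ : ℝ, 0 < c₁ ∧ 0 < c₂ ∧ ∃ N : ℕ, ∀ n ≥ N,
      ∃ m : ℕ, IsGreatest {m' | ∃ L : List ℕ, (∀ u ∈ L, IsAtom46 u) ∧ L.prod = 70 ^ n ∧
          m' = L.toFinset.card} m ∧
        c₁ * (n : ℝ) ^ ((2 : ℝ) / 3) ≤ (m : ℝ) ∧
        (m : ℝ) ≤ c₂ * (n : ℝ) ^ ((2 : ℝ) / 3) := by
  refine ⟨1 / 4, 12, by norm_num, by norm_num, 8, fun n hn => ?_⟩
  obtain ⟨L, hL, hprod, hcard⟩ := exists_atom_factorization_le_card hn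
  have hle : ∀ L : List ℕ, (∀ u ∈ L, IsAtom46 u) → L.prod = 70 ^ n →
      (L.toFinset.card : ℝ) ≤ 12 * (n : ℝ) ^ ((2 : ℝ) / 3) :=
    fun L => card_toFinset_le_of_prod_eq (by omega)
  have hbdd : BddAbove {m' | ∃ L : List ℕ, (∀ u ∈ L, IsAtom46 u) ∧ L.prod = 70 ^ n ∧
      m' = L.toFinset.card} := ⟨⌊12 * (n : ℝ) ^ ((2 : ℝ) / 3)⌋₊, by
    rintro _ ⟨L, hL, hprod, rfl⟩
    exact Nat.le_floor (hle L hL hprod)⟩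
  obtain ⟨m, hm⟩ := hbdd.exists_isGreatest_of_nonempty ⟨_, L, hL, hprod, rfl⟩
  obtain ⟨L', hL', hprod', rfl⟩ := hm.1
  exact ⟨_, hm, hcard.trans (by exact_mod_cast hm.2 ⟨L, hL, hprod, rfl⟩), hle L' hL' hprod'⟩
end

section
/- Fix x = 2^a · 5^b · 7^c in M_{4,6} with a ≥ 1. Then the minimum factorization length ℓ_1^m(x^n) and the minimum maximal-multiplicity ℓ_∞^m(x^n) over factorizations of x^n into atoms of M_{4,6} both grow linearly: ℓ_1^m(x^n) ∈ Θ(n) and ℓ_∞^m(x^n) ∈ Θ(n). -/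
/-- The 1-length of a factorization given as a list of atoms: the number of atoms
counted with multiplicity. -/
def len1 (L : List ℕ) : ℕ := L.length

/-- The ∞-length of a factorization given as a list of atoms: the maximum
multiplicity with which any atom occurs. -/
def lenInf (L : List ℕ) : ℕ := L.toFinset.sup (fun u => L.count u)

lemma M46_mul {v w : ℕ} (hv : v ∈ M46) (hw : w ∈ M46) : v * w ∈ M46 := by
  rcases hv with rfl | ⟨hv1, hv4⟩
  · simpa using hw
  rcases hw with rfl | ⟨hw1, hw4⟩
  · rw [mul_one]; exact Or.inr ⟨hv1, hv4⟩
  · exact Or.inr ⟨Nat.one_le_iff_ne_zero.2 (by positivity), by rw [Nat.mul_mod, hv4, hw4]⟩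

lemma M46_pow {x : ℕ} (hx : x ∈ M46) (n : ℕ) : x ^ n ∈ M46 := by
  induction n with
  | zero => exact Or.inl rfl
  | succ n ih => rw [pow_succ]; exact M46_mul ih hx

lemma exists_atoms_prod_eq {m : ℕ} (hm : m ∈ M46) :
    ∃ L : List ℕ, (∀ u ∈ L, IsAtom46 u) ∧ L.prod = m := by
  induction m using Nat.strong_induction_on with
  | _ m ih =>
  by_cases hatom : IsAtom46 m
  · exact ⟨[m], by simpa using hatom, by simp⟩
  obtain rfl | hm1 : m = 1 ∨ 1 < m := by rcases hm with h | ⟨h, -⟩ <;> omega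
  · exact ⟨[], by simp, rfl⟩
  obtain ⟨v, w, hv, hw, rfl, hv1, hw1⟩ :
      ∃ v w, v ∈ M46 ∧ w ∈ M46 ∧ m = v * w ∧ v ≠ 1 ∧ w ≠ 1 := by
    simpa [IsAtom46, hm, hm1] using hatom
  have hv2 : 1 < v := by rcases hv with rfl | ⟨-, h⟩ <;> omega
  have hw2 : 1 < w := by rcases hw with rfl | ⟨-, h⟩ <;> omega
  obtain ⟨Lv, hLv, rfl⟩ := ih v (lt_mul_of_one_lt_right (by omega) hw2) hv
  obtain ⟨Lw, hLw, rfl⟩ := ih w (lt_mul_of_one_lt_left (by omega) hv2) hw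
  exact ⟨Lv ++ Lw, by simpa [or_imp, forall_and] using ⟨hLv, hLw⟩, List.prod_append⟩

namespace IsAtom46

variable {u : ℕ} (hu : IsAtom46 u)
include hu

lemma mod_six : u % 6 = 4 := by
  obtain ⟨rfl | ⟨-, h⟩, h1, -⟩ := hu <;> omega

lemma ne_zero : u ≠ 0 := by
  have := hu.mod_six; omega

lemma one_le_factorization_two : 1 ≤ u.factorization 2 :=
  (Nat.prime_two.dvd_iff_one_le_factorization hu.ne_zero).1 (by have := hu.mod_six; omega)

lemma factorization_two_le_two : u.factorization 2 ≤ 2 := by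
  by_contra! h
  obtain ⟨v, rfl⟩ : 2 ^ 3 ∣ u := (Nat.prime_two.pow_dvd_iff_le_factorization hu.ne_zero).2 h
  have h6 := hu.mod_six
  have := hu.2.2 4 (2 * v) (Or.inr ⟨by norm_num, by norm_num⟩) (Or.inr ⟨by omega, by omega⟩)
    (by ring)
  omega

end IsAtom46

lemma Nat.factorization_list_prod {L : List ℕ} (hL : 0 ∉ L) (p : ℕ) :
    L.prod.factorization p = (L.map (·.factorization p)).sum := by
  induction L with
  | nil => simp
  | cons u L ih =>
    simp only [List.mem_cons, not_or] at hL
    rw [List.prod_cons, Nat.factorization_mul (Ne.symm hL.1) (List.prod_ne_zero hL.2),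
      Finsupp.add_apply, ih hL.2, List.map_cons, List.sum_cons]

lemma exists_eq_two_pow_mul_five_pow_mul_seven_pow {u A B C : ℕ}
    (hu : u ∣ 2 ^ A * 5 ^ B * 7 ^ C) : ∃ i j k, u = 2 ^ i * 5 ^ j * 7 ^ k := by
  obtain ⟨v, d₇, hv, hd₇, rfl⟩ := dvd_mul.1 hu
  obtain ⟨d₂, d₅, hd₂, hd₅, rfl⟩ := dvd_mul.1 hv
  obtain ⟨i, -, rfl⟩ := (Nat.dvd_prime_pow Nat.prime_two).1 hd₂
  obtain ⟨j, -, rfl⟩ := (Nat.dvd_prime_pow (by norm_num)).1 hd₅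
  obtain ⟨k, -, rfl⟩ := (Nat.dvd_prime_pow (by norm_num)).1 hd₇
  exact ⟨i, j, k, rfl⟩

lemma factorization_two_pow_mul_five_pow_mul_seven_pow (i j k : ℕ) :
    (2 ^ i * 5 ^ j * 7 ^ k).factorization 2 = i ∧ (2 ^ i * 5 ^ j * 7 ^ k).factorization 5 = j ∧
      (2 ^ i * 5 ^ j * 7 ^ k).factorization 7 = k := by
  simp [Nat.factorization_mul, Nat.prime_two.factorization,
    (by norm_num : Nat.Prime 5).factorization, (by norm_num : Nat.Prime 7).factorization]

lemma count_le_lenInf (L : List ℕ) (u : ℕ) : L.count u ≤ lenInf L := by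
  by_cases hu : u ∈ L
  · exact Finset.le_sup (f := fun v => L.count v) (List.mem_toFinset.2 hu)
  · simp [List.count_eq_zero_of_not_mem hu]

lemma lenInf_le_len1 (L : List ℕ) : lenInf L ≤ len1 L :=
  Finset.sup_le fun _ _ => List.count_le_length

lemma lenInf_le_lenInf_of_sublist {L₁ L₂ : List ℕ} (h : L₁.Sublist L₂) : lenInf L₁ ≤ lenInf L₂ :=
  Finset.sup_le fun u _ => (h.count_le u).trans (count_le_lenInf L₂ u)

lemma length_le_card_mul_lenInf {L : List ℕ} {s : Finset ℕ} (hs : ∀ u ∈ L, u ∈ s) :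
    L.length ≤ s.card * lenInf L :=
  calc L.length = ∑ u ∈ L.toFinset, L.count u := (List.sum_toFinset_count_eq_length L).symm
    _ ≤ ∑ u ∈ s, L.count u :=
        Finset.sum_le_sum_of_subset fun u hu => hs u (List.mem_toFinset.1 hu)
    _ ≤ ∑ _u ∈ s, lenInf L := Finset.sum_le_sum fun u _ => count_le_lenInf L u
    _ = s.card * lenInf L := by rw [Finset.sum_const, smul_eq_mul]

/-- Entries of weight at least `T` are few because the total weight is bounded; entries of
smaller weight lie in `s`, and each of them repeats at most `lenInf L` times. -/
lemma mul_length_le_sum_add_card_mul_lenInf {L : List ℕ} (w : ℕ → ℕ) (T : ℕ) {s : Finset ℕ}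
    (hs : ∀ u ∈ L, w u < T → u ∈ s) :
    T * L.length ≤ (L.map w).sum + T * (s.card * lenInf L) := by
  have hheavy : T * (L.filter (T ≤ w ·)).length ≤ (L.map w).sum :=
    calc T * (L.filter (T ≤ w ·)).length
        ≤ ((L.filter (T ≤ w ·)).map w).sum := by
          rw [mul_comm, ← smul_eq_mul, ← List.length_map w]
          exact List.card_nsmul_le_sum _ _ (by
            simp only [List.mem_map, List.mem_filter, decide_eq_true_eq]
            rintro _ ⟨u, ⟨-, hu⟩, rfl⟩
            exact hu)
      _ ≤ (L.map w).sum := ((List.filter_sublist).map w).sum_le_sum fun _ _ => Nat.zero_le _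
  have hlight : (L.filter (fun u => !decide (T ≤ w u))).length ≤ s.card * lenInf L :=
    (length_le_card_mul_lenInf fun u hu => by
        simp only [List.mem_filter, Bool.not_eq_eq_eq_not, Bool.not_true, decide_eq_false_iff_not,
          not_le] at hu
        exact hs u hu.1 hu.2).trans
      (Nat.mul_le_mul_left _ (lenInf_le_lenInf_of_sublist List.filter_sublist))
  rw [List.length_eq_length_filter_add (T ≤ w ·), mul_add]
  exact add_le_add hheavy (Nat.mul_le_mul_left T hlight)

section AtomFactorization

variable {A B C : ℕ} {L : List ℕ} (hL : ∀ u ∈ L, IsAtom46 u)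
  (hprod : L.prod = 2 ^ A * 5 ^ B * 7 ^ C)
include hL hprod

lemma sum_map_factorization (p : ℕ) :
    (L.map (·.factorization p)).sum = (2 ^ A * 5 ^ B * 7 ^ C).factorization p := by
  rw [← hprod, Nat.factorization_list_prod fun h => (hL 0 h).ne_zero rfl]

lemma length_le_and_le_two_mul_length : L.length ≤ A ∧ A ≤ 2 * L.length := by
  have h2 := sum_map_factorization hL hprod 2
  rw [(factorization_two_pow_mul_five_pow_mul_seven_pow A B C).1] at h2
  constructor
  · simpa [← h2] using List.card_nsmul_le_sum (L.map (·.factorization 2)) 1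
      (by simpa using fun u hu => (hL u hu).one_le_factorization_two)
  · simpa [← h2, mul_comm] using List.sum_le_card_nsmul (L.map (·.factorization 2)) 2
      (by simpa using fun u hu => (hL u hu).factorization_two_le_two)

lemma le_mul_lenInf {T : ℕ} (hT : 0 < T) (hTA : 4 * (B + C) ≤ T * A) :
    A ≤ 12 * T ^ 2 * lenInf L := by
  set w : ℕ → ℕ := fun u => u.factorization 5 + u.factorization 7
  set s := (Finset.range 3 ×ˢ Finset.range T ×ˢ Finset.range T).image
    fun t => 2 ^ t.1 * 5 ^ t.2.1 * 7 ^ t.2.2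
  have hsum : (L.map w).sum = B + C := by
    simp only [w, List.sum_map_add, sum_map_factorization hL hprod,
      factorization_two_pow_mul_five_pow_mul_seven_pow]
  have hcard : s.card ≤ 3 * T * T := Finset.card_image_le.trans (by simp [mul_assoc])
  have hlight : ∀ u ∈ L, w u < T → u ∈ s := by
    intro u hu hwu
    obtain ⟨i, j, k, rfl⟩ :=
      exists_eq_two_pow_mul_five_pow_mul_seven_pow (hprod ▸ List.dvd_prod hu)
    have h2 := (hL _ hu).factorization_two_le_two
    obtain ⟨hi, hj, hk⟩ := factorization_two_pow_mul_five_pow_mul_seven_pow i j k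
    rw [hi] at h2
    simp only [w, hj, hk] at hwu
    refine Finset.mem_image.2 ⟨(i, j, k), ?_, rfl⟩
    simp only [Finset.mem_product, Finset.mem_range]
    omega
  have hpigeon := mul_length_le_sum_add_card_mul_lenInf w T hlight
  have hA := (length_le_and_le_two_mul_length hL hprod).2
  rw [hsum] at hpigeon
  have : T * A ≤ T * (12 * T ^ 2 * lenInf L) := by
    nlinarith [Nat.mul_le_mul_right (T * lenInf L) hcard]
  exact Nat.le_of_mul_le_mul_left this hT

end AtomFactorization

lemma exists_isLeast_of_bounds {S : Set ℕ} {lo hi : ℝ} (hlo : ∀ m ∈ S, lo ≤ m)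
    (hhi : ∃ m ∈ S, (m : ℝ) ≤ hi) : ∃ m, IsLeast S m ∧ lo ≤ m ∧ (m : ℝ) ≤ hi := by
  obtain ⟨m₀, hm₀, hm₀hi⟩ := hhi
  have hmem := Nat.sInf_mem ⟨m₀, hm₀⟩
  exact ⟨sInf S, ⟨hmem, fun m hm => Nat.sInf_le hm⟩, hlo _ hmem,
    le_trans (by exact_mod_cast Nat.sInf_le hm₀) hm₀hi⟩

theorem stmt18 (a b c : ℕ) (ha : 1 ≤ a) (hx : 2 ^ a * 5 ^ b * 7 ^ c ∈ M46) :
    (∃ c₁ c₂ : ℝ, 0 < c₁ ∧ 0 < c₂ ∧ ∃ N : ℕ, ∀ n ≥ N,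
      ∃ m : ℕ, IsLeast {m' | ∃ L : List ℕ, (∀ u ∈ L, IsAtom46 u) ∧
          L.prod = (2 ^ a * 5 ^ b * 7 ^ c) ^ n ∧ m' = len1 L} m ∧
        c₁ * (n : ℝ) ≤ (m : ℝ) ∧ (m : ℝ) ≤ c₂ * (n : ℝ)) ∧
    (∃ c₁ c₂ : ℝ, 0 < c₁ ∧ 0 < c₂ ∧ ∃ N : ℕ, ∀ n ≥ N,
      ∃ m : ℕ, IsLeast {m' | ∃ L : List ℕ, (∀ u ∈ L, IsAtom46 u) ∧
          L.prod = (2 ^ a * 5 ^ b * 7 ^ c) ^ n ∧ m' = lenInf L} m ∧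
        c₁ * (n : ℝ) ≤ (m : ℝ) ∧ (m : ℝ) ≤ c₂ * (n : ℝ)) := by
  have hpow (n : ℕ) : (2 ^ a * 5 ^ b * 7 ^ c) ^ n = 2 ^ (a * n) * 5 ^ (b * n) * 7 ^ (c * n) := by
    rw [mul_pow, mul_pow, ← pow_mul, ← pow_mul, ← pow_mul]
  have hfac (n : ℕ) := exists_atoms_prod_eq (M46_pow hx n)
  have hlen {n : ℕ} {L : List ℕ} (hL : ∀ u ∈ L, IsAtom46 u)
      (hprod : L.prod = (2 ^ a * 5 ^ b * 7 ^ c) ^ n) : len1 L ≤ a * n ∧ a * n ≤ 2 * len1 L :=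
    length_le_and_le_two_mul_length hL (hprod.trans (hpow n))
  have ha' : (0 : ℝ) < a := by exact_mod_cast ha
  set T := 4 * (b + c) + 1
  refine ⟨⟨a / 2, a, by positivity, ha', 0, fun n _ => exists_isLeast_of_bounds ?_ ?_⟩,
    ⟨a / (12 * T ^ 2), a, by positivity, ha', 0, fun n _ => exists_isLeast_of_bounds ?_ ?_⟩⟩
  · rintro _ ⟨L, hL, hprod, rfl⟩
    have : ((a * n : ℕ) : ℝ) ≤ 2 * len1 L := by exact_mod_cast (hlen hL hprod).2
    push_cast at this
    linarith
  · obtain ⟨L, hL, hprod⟩ := hfac n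
    exact ⟨_, ⟨L, hL, hprod, rfl⟩, by exact_mod_cast (hlen hL hprod).1⟩
  · rintro _ ⟨L, hL, hprod, rfl⟩
    have hTA : 4 * (b * n + c * n) ≤ T * (a * n) := by
      simp only [T]; nlinarith [Nat.mul_le_mul_left ((b + c) * n) ha]
    have : ((a * n : ℕ) : ℝ) ≤ 12 * T ^ 2 * lenInf L := by
      exact_mod_cast le_mul_lenInf hL (hprod.trans (hpow n)) (by omega) hTA
    push_cast at this
    rw [div_mul_eq_mul_div, div_le_iff₀ (by positivity)]
    linarith
  · obtain ⟨L, hL, hprod⟩ := hfac n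
    exact ⟨_, ⟨L, hL, hprod, rfl⟩, by exact_mod_cast (lenInf_le_len1 L).trans (hlen hL hprod).1⟩
end
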